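/- arXiv:2406.02800 — 3 statements merged into one kernel-verified Lean document; each statement's English description precedes it below -/
import Mathlib

section
/- lim_{T → ∞} E[Z_T V_T] = 0. -/
/-!
Write `R` for the covariance kernel of `B` and `A_T f = b e^{-bT} ∫₀ᵀ e^{bs} f s ds` for the
exponential moving average, so that `V_T = B_T - A_T B`. Fubini gives
`E[Z_T V_T] = ∫₀ᵀ e^{-bt} (R t T - A_T (R t)) dt`. For fixed `t`, `R t s → g t / 2` as `s → ∞`,
hence so does its moving average, and the integrand, bounded by a multiple of `e^{-bt}`, tends
to `0`; dominated convergence concludes.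

Fubini needs `E[B_t ^ 2] = g t` to be a genuine integral and not Lean's junk value `0`. If `g`
vanished at some `t > 0`, Fatou's lemma at the last zero `c ≥ t` of `g` would force `B_c = 0`
almost surely; then `g (x + c) = g x`, which is incompatible with `g 0 = 0` and `g → α² > 0`.
-/

open MeasureTheory Filter Set Real Topology Function

theorem lintegral_ofReal_sq_le_liminf {Ω ι : Type*} [MeasurableSpace Ω] {P : Measure Ω}
    {l : Filter ι} [l.NeBot] [l.IsCountablyGenerated] {X : ι → Ω → ℝ} {Y : Ω → ℝ}
    (hX : ∀ i, Measurable (X i)) (hXY : ∀ᵐ ω ∂P, Tendsto (fun i => X i ω) l (𝓝 (Y ω))) :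
    ∫⁻ ω, ENNReal.ofReal (Y ω ^ 2) ∂P ≤ liminf (fun i => ∫⁻ ω, ENNReal.ofReal (X i ω ^ 2) ∂P) l :=
  calc ∫⁻ ω, ENNReal.ofReal (Y ω ^ 2) ∂P
      = ∫⁻ ω, liminf (fun i => ENNReal.ofReal (X i ω ^ 2)) l ∂P := by
        refine lintegral_congr_ae (hXY.mono fun ω hω => ?_)
        exact (((ENNReal.continuous_ofReal.comp (continuous_pow 2)).tendsto _).comp
          hω).liminf_eq.symm
    _ ≤ _ := lintegral_liminf_le fun i => ((hX i).pow_const 2).ennreal_ofReal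

theorem tendsto_setIntegral_Ioc_mul {φ : ℝ → ℝ} (hφ : IntegrableOn φ (Ioi 0))
    {h : ℝ → ℝ → ℝ} {H : ℝ → ℝ} {K : ℝ} (h_meas : ∀ T, AEStronglyMeasurable (h T))
    (h_bdd : ∀ T, ∀ t ∈ Ioc 0 T, |h T t| ≤ K)
    (h_tendsto : ∀ t, 0 < t → Tendsto (fun T => h T t) atTop (𝓝 (H t))) :
    Tendsto (fun T => ∫ t in Ioc 0 T, φ t * h T t) atTop (𝓝 (∫ t in Ioi 0, φ t * H t)) := by
  have hK : 0 ≤ K := (abs_nonneg _).trans (h_bdd 1 1 ⟨one_pos, le_rfl⟩)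
  have h_eq : ∀ T, ∫ t in Ioc 0 T, φ t * h T t
      = ∫ t in Ioi 0, (Iic T).indicator (fun t => φ t * h T t) t := fun T => by
    rw [setIntegral_indicator measurableSet_Iic, Ioi_inter_Iic]
  simp_rw [h_eq]
  refine tendsto_integral_filter_of_dominated_convergence (fun t => K * ‖φ t‖)
    (Eventually.of_forall fun T =>
      (hφ.aestronglyMeasurable.mul (h_meas T).restrict).indicator measurableSet_Iic)
    (Eventually.of_forall fun T => ae_restrict_of_forall_mem measurableSet_Ioi fun t ht => ?_)
    (hφ.norm.const_mul K) (ae_restrict_of_forall_mem measurableSet_Ioi fun t ht => ?_)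
  · by_cases htT : t ≤ T
    · rw [indicator_of_mem (show t ∈ Iic T from htT), norm_mul, mul_comm K,
        Real.norm_eq_abs (h T t)]
      exact mul_le_mul_of_nonneg_left (h_bdd T t ⟨ht, htT⟩) (norm_nonneg _)
    · rw [indicator_of_notMem (show t ∉ Iic T from htT), norm_zero]
      positivity
  · refine ((h_tendsto t ht).const_mul (φ t)).congr' ?_
    filter_upwards [eventually_ge_atTop t] with T hT
    rw [indicator_of_mem (show t ∈ Iic T from hT)]

theorem integral_Ioi_mul_exp_neg_mul {b : ℝ} (hb : 0 < b) :
    ∫ u in Ioi 0, b * exp (-b * u) = 1 := by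
  rw [integral_const_mul, integral_exp_mul_Ioi (neg_lt_zero.2 hb)]
  field_simp
  simp

noncomputable def expAverage (b : ℝ) (f : ℝ → ℝ) (T : ℝ) : ℝ :=
  b * exp (-b * T) * ∫ s in 0..T, exp (b * s) * f s

theorem expAverage_eq_setIntegral (b : ℝ) (f : ℝ → ℝ) {T : ℝ} (hT : 0 ≤ T) :
    expAverage b f T = ∫ u in Ioc 0 T, b * exp (-b * u) * f (T - u) := by
  have hsub :=
    intervalIntegral.integral_comp_sub_left (fun s => exp (b * s) * f s) T (a := 0) (b := T)
  simp only [sub_self, sub_zero] at hsub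
  rw [expAverage, ← hsub, ← intervalIntegral.integral_const_mul,
    intervalIntegral.integral_of_le hT]
  refine setIntegral_congr_fun measurableSet_Ioc fun u _ => ?_
  have hexp : exp (-b * T) * exp (b * (T - u)) = exp (-b * u) := by rw [← exp_add]; ring_nf
  simp only [← hexp]
  ring

theorem abs_expAverage_le {b : ℝ} (hb : 0 < b) {f : ℝ → ℝ} {K T : ℝ} (hT : 0 ≤ T)
    (hf : ∀ s, 0 ≤ s → |f s| ≤ K) : |expAverage b f T| ≤ K := by
  have hK : 0 ≤ K := (abs_nonneg _).trans (hf 0 le_rfl)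
  have hint : IntegrableOn (fun u => b * exp (-b * u) * K) (Ioi 0) :=
    ((exp_neg_integrableOn_Ioi 0 hb).const_mul b).mul_const K
  rw [expAverage_eq_setIntegral b f hT, ← Real.norm_eq_abs]
  calc ‖∫ u in Ioc 0 T, b * exp (-b * u) * f (T - u)‖
      ≤ ∫ u in Ioc 0 T, b * exp (-b * u) * K := by
        refine norm_integral_le_of_norm_le (hint.mono_set Ioc_subset_Ioi_self)
          (ae_restrict_of_forall_mem measurableSet_Ioc fun u hu => ?_)
        rw [norm_mul, Real.norm_of_nonneg (by positivity)]
        exact mul_le_mul_of_nonneg_left (hf _ (sub_nonneg.2 hu.2)) (by positivity)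
    _ ≤ ∫ u in Ioi 0, b * exp (-b * u) * K :=
        setIntegral_mono_set hint (ae_of_all _ fun u => by positivity)
          Ioc_subset_Ioi_self.eventuallyLE
    _ = K := by rw [integral_mul_const, integral_Ioi_mul_exp_neg_mul hb, one_mul]

theorem tendsto_expAverage {b : ℝ} (hb : 0 < b) {f : ℝ → ℝ} {K L : ℝ} (hf : Continuous f)
    (hf_bdd : ∀ s, 0 ≤ s → |f s| ≤ K) (hf_lim : Tendsto f atTop (𝓝 L)) :
    Tendsto (expAverage b f) atTop (𝓝 L) := by
  have hlim := tendsto_setIntegral_Ioc_mul ((exp_neg_integrableOn_Ioi 0 hb).const_mul b)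
    (h := fun T u => f (T - u)) (H := fun _ => L)
    (fun T => (hf.comp (continuous_sub_left T)).aestronglyMeasurable)
    (fun T u hu => hf_bdd _ (sub_nonneg.2 hu.2))
    (fun u _ => hf_lim.comp (tendsto_atTop_add_const_right _ (-u) tendsto_id))
  rw [integral_mul_const, integral_Ioi_mul_exp_neg_mul hb, one_mul] at hlim
  exact hlim.congr'
    ((eventually_ge_atTop 0).mono fun T hT => (expAverage_eq_setIntegral b f hT).symm)

theorem continuous_expAverage {R : ℝ → ℝ → ℝ} (hR : Continuous (uncurry R)) (b T : ℝ) :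
    Continuous fun t => expAverage b (R t) T :=
  continuous_const.mul (intervalIntegral.continuous_parametric_intervalIntegral_of_continuous'
    ((continuous_exp.comp (continuous_const.mul continuous_snd)).mul hR) 0 T)

section Fubini

variable {α β Ω : Type*} [MeasurableSpace α] [MeasurableSpace β] [MeasurableSpace Ω]
  {μ : Measure α} {ν : Measure β} {P : Measure Ω} [IsFiniteMeasure μ] [IsFiniteMeasure ν]
  [SFinite P] {X : α → Ω → ℝ} {Y : β → Ω → ℝ} {K : ENNReal}

theorem integrable_prod_prod_mul (hX : Measurable (uncurry X)) (hY : Measurable (uncurry Y))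
    (hK : K ≠ ⊤) (hXY : ∀ᵐ t ∂μ, ∀ᵐ s ∂ν, ∫⁻ ω, ‖X t ω * Y s ω‖ₑ ∂P ≤ K) :
    Integrable (fun q : (α × β) × Ω => X q.1.1 q.2 * Y q.1.2 q.2) ((μ.prod ν).prod P) := by
  have hmeas : Measurable fun q : (α × β) × Ω => X q.1.1 q.2 * Y q.1.2 q.2 :=
    (hX.comp (measurable_fst.fst.prodMk measurable_snd)).mul
      (hY.comp (measurable_fst.snd.prodMk measurable_snd))
  refine ⟨hmeas.aestronglyMeasurable, hasFiniteIntegral_iff_enorm.2 ?_⟩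
  rw [lintegral_prod _ hmeas.enorm.aemeasurable,
    lintegral_prod _ (hmeas.enorm.lintegral_prod_right').aemeasurable]
  calc ∫⁻ t, ∫⁻ s, ∫⁻ ω, ‖X t ω * Y s ω‖ₑ ∂P ∂ν ∂μ ≤ ∫⁻ _, ∫⁻ _, K ∂ν ∂μ :=
        lintegral_mono_ae (hXY.mono fun t ht => lintegral_mono_ae ht)
    _ < ⊤ := by simp [lintegral_const, ENNReal.mul_lt_top, hK.lt_top]

theorem integrable_integral_mul_integral (hX : Measurable (uncurry X))
    (hY : Measurable (uncurry Y)) (hK : K ≠ ⊤)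
    (hXY : ∀ᵐ t ∂μ, ∀ᵐ s ∂ν, ∫⁻ ω, ‖X t ω * Y s ω‖ₑ ∂P ≤ K) :
    Integrable (fun ω => (∫ t, X t ω ∂μ) * ∫ s, Y s ω ∂ν) P := by
  simpa only [← integral_prod_mul] using
    (integrable_prod_prod_mul hX hY hK hXY).integral_prod_right

theorem integrable_integral_integral_mul (hX : Measurable (uncurry X))
    (hY : Measurable (uncurry Y)) (hK : K ≠ ⊤)
    (hXY : ∀ᵐ t ∂μ, ∀ᵐ s ∂ν, ∫⁻ ω, ‖X t ω * Y s ω‖ₑ ∂P ≤ K) :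
    Integrable (fun t => ∫ s, ∫ ω, X t ω * Y s ω ∂P ∂ν) μ :=
  (integrable_prod_prod_mul hX hY hK hXY).integral_prod_left.integral_prod_left

theorem integral_integral_mul_integral (hX : Measurable (uncurry X))
    (hY : Measurable (uncurry Y)) (hK : K ≠ ⊤)
    (hXY : ∀ᵐ t ∂μ, ∀ᵐ s ∂ν, ∫⁻ ω, ‖X t ω * Y s ω‖ₑ ∂P ≤ K) :
    ∫ ω, (∫ t, X t ω ∂μ) * (∫ s, Y s ω ∂ν) ∂P = ∫ t, ∫ s, ∫ ω, X t ω * Y s ω ∂P ∂ν ∂μ := by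
  have hint := integrable_prod_prod_mul hX hY hK hXY
  simp_rw [← integral_prod_mul]
  rw [← integral_integral_swap hint, integral_prod _ hint.integral_prod_left]

theorem integral_integral_mul_sub_integral {ν₁ ν₂ : Measure β} [IsFiniteMeasure ν₁]
    [IsFiniteMeasure ν₂] (hX : Measurable (uncurry X)) (hY : Measurable (uncurry Y)) (hK : K ≠ ⊤)
    (h₁ : ∀ᵐ t ∂μ, ∀ᵐ s ∂ν₁, ∫⁻ ω, ‖X t ω * Y s ω‖ₑ ∂P ≤ K)
    (h₂ : ∀ᵐ t ∂μ, ∀ᵐ s ∂ν₂, ∫⁻ ω, ‖X t ω * Y s ω‖ₑ ∂P ≤ K) (a : ℝ) :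
    ∫ ω, (∫ t, X t ω ∂μ) * ((∫ s, Y s ω ∂ν₁) - a * ∫ s, Y s ω ∂ν₂) ∂P
      = ∫ t, ((∫ s, ∫ ω, X t ω * Y s ω ∂P ∂ν₁) - a * ∫ s, ∫ ω, X t ω * Y s ω ∂P ∂ν₂) ∂μ := by
  simp_rw [mul_sub, mul_left_comm _ a]
  rw [integral_sub (integrable_integral_mul_integral hX hY hK h₁)
      ((integrable_integral_mul_integral hX hY hK h₂).const_mul a),
    integral_sub (integrable_integral_integral_mul hX hY hK h₁)
      ((integrable_integral_integral_mul hX hY hK h₂).const_mul a),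
    integral_const_mul, integral_const_mul, integral_integral_mul_integral hX hY hK h₁,
    integral_integral_mul_integral hX hY hK h₂]

end Fubini

/-- `g` is clamped at `0` so that the kernel is continuous on all of `ℝ²`. -/
noncomputable def covKernel (g : ℝ → ℝ) (s t : ℝ) : ℝ :=
  (g (max t 0) + g (max s 0) - g |t - s|) / 2

section CovKernel

variable {g : ℝ → ℝ}

theorem covKernel_of_nonneg {s t : ℝ} (hs : 0 ≤ s) (ht : 0 ≤ t) :
    covKernel g s t = (g t + g s - g |t - s|) / 2 := by
  rw [covKernel, max_eq_left hs, max_eq_left ht]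

theorem continuous_covKernel (hg : ContinuousOn g (Ici 0)) :
    Continuous (uncurry (covKernel g)) := by
  have hG : Continuous fun x => g (max x 0) :=
    hg.comp_continuous (continuous_id.max continuous_const) fun x => le_max_right x 0
  have hG' : Continuous fun x => g |x| := hg.comp_continuous continuous_abs abs_nonneg
  exact (((hG.comp continuous_snd).add (hG.comp continuous_fst)).sub
    (hG'.comp (continuous_snd.sub continuous_fst))).div_const 2

theorem abs_covKernel_le {C : ℝ} (hg : ∀ t, 0 ≤ t → |g t| ≤ C) (s t : ℝ) :
    |covKernel g s t| ≤ 3 * C / 2 := by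
  have h₁ := abs_le.1 (hg _ (le_max_right t 0))
  have h₂ := abs_le.1 (hg _ (le_max_right s 0))
  have h₃ := abs_le.1 (hg _ (abs_nonneg (t - s)))
  rw [covKernel, abs_le]
  constructor <;> linarith

theorem tendsto_covKernel {L : ℝ} (hg : Tendsto g atTop (𝓝 L)) (s : ℝ) :
    Tendsto (covKernel g s) atTop (𝓝 (g (max s 0) / 2)) := by
  have h₁ : Tendsto (fun t => g (max t 0)) atTop (𝓝 L) :=
    hg.comp (tendsto_atTop_mono (fun t => le_max_left t 0) tendsto_id)
  have h₂ : Tendsto (fun t => g |t - s|) atTop (𝓝 L) :=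
    hg.comp (tendsto_abs_atTop_atTop.comp (tendsto_atTop_add_const_right _ (-s) tendsto_id))
  have h := ((h₁.add (tendsto_const_nhds (x := g (max s 0)))).sub h₂).div_const 2
  rwa [add_sub_cancel_left] at h

end CovKernel

section StationaryIncrements

variable {Ω : Type*} [MeasurableSpace Ω] {P : Measure Ω} {g : ℝ → ℝ} {B : ℝ → Ω → ℝ}

theorem integral_sq_eq_of_cov (hg_zero : g 0 = 0)
    (hB_cov : ∀ s, 0 ≤ s → ∀ t, 0 ≤ t → ∫ ω, B s ω * B t ω ∂P = (g t + g s - g |t - s|) / 2)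
    {t : ℝ} (ht : 0 ≤ t) : ∫ ω, B t ω ^ 2 ∂P = g t := by
  simpa [hg_zero, ← sq] using hB_cov t ht t ht

theorem integrable_sq_of_ne_zero (hg_zero : g 0 = 0)
    (hB_cov : ∀ s, 0 ≤ s → ∀ t, 0 ≤ t → ∫ ω, B s ω * B t ω ∂P = (g t + g s - g |t - s|) / 2)
    {t : ℝ} (ht : 0 ≤ t) (hgt : g t ≠ 0) : Integrable (fun ω => B t ω ^ 2) P := by
  by_contra h
  exact hgt (by rw [← integral_sq_eq_of_cov hg_zero hB_cov ht, integral_undef h])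

theorem not_ae_eq_zero_of_cov {α2 : ℝ} (hα2 : 0 < α2) (hg_lim : Tendsto g atTop (𝓝 α2))
    (hg_zero : g 0 = 0)
    (hB_cov : ∀ s, 0 ≤ s → ∀ t, 0 ≤ t → ∫ ω, B s ω * B t ω ∂P = (g t + g s - g |t - s|) / 2)
    {c : ℝ} (hc : 0 < c) : ¬ B c =ᵐ[P] 0 := by
  intro hBc
  have hcov_zero : ∀ x, 0 ≤ x → g x + g c - g |x - c| = 0 := fun x hx => by
    have h := hB_cov c hc.le x hx
    rw [integral_eq_zero_of_ae (hBc.mono fun ω hω => by simp [hω])] at h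
    linarith
  have hgc : g c = 0 := by simpa [hg_zero] using hcov_zero c hc.le
  have hg_mul : ∀ n : ℕ, g (n * c) = 0 := by
    intro n
    induction n with
    | zero => simpa using hg_zero
    | succ n ih =>
      have h := hcov_zero ((n + 1) * c) (by positivity)
      rw [show (n + 1 : ℝ) * c - c = n * c by ring, abs_of_nonneg (by positivity), ih, hgc] at h
      simpa using h
  have hlim := hg_lim.comp (tendsto_natCast_atTop_atTop.atTop_mul_const hc)
  simp only [comp_def, hg_mul] at hlim
  exact hα2.ne (tendsto_nhds_unique tendsto_const_nhds hlim)

theorem variance_ne_zero {α2 : ℝ} (hα2 : 0 < α2) (hg_cont : ContinuousOn g (Ici 0))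
    (hg_zero : g 0 = 0) (hg_lim : Tendsto g atTop (𝓝 α2))
    (hB_meas : Measurable fun p : ℝ × Ω => B p.1 p.2) (hB_cont : ∀ᵐ ω ∂P, Continuous fun t => B t ω)
    (hB_cov : ∀ s, 0 ≤ s → ∀ t, 0 ≤ t → ∫ ω, B s ω * B t ω ∂P = (g t + g s - g |t - s|) / 2)
    {t : ℝ} (ht : 0 < t) : g t ≠ 0 := by
  intro hgt
  obtain ⟨c, ⟨htc, hgc⟩, hc_max⟩ : ∃ c, IsGreatest (Ici t ∩ g ⁻¹' {0}) c := by
    obtain ⟨M, hM⟩ := eventually_atTop.1 (hg_lim.eventually_ne hα2.ne')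
    refine ⟨_, IsClosed.isGreatest_csSup ?_ ⟨t, mem_Ici.2 le_rfl, hgt⟩
      ⟨M, fun u hu => not_lt.1 fun hMu => hM u hMu.le hu.2⟩⟩
    exact (hg_cont.mono (Ici_subset_Ici.2 ht.le)).preimage_isClosed_of_isClosed isClosed_Ici
      isClosed_singleton
  have hc : 0 < c := ht.trans_le htc
  have hvar : ∀ᶠ u in 𝓝[>] c, ∫⁻ ω, ENNReal.ofReal (B u ω ^ 2) ∂P = ENNReal.ofReal (g u) := by
    filter_upwards [self_mem_nhdsWithin] with u (hu : c < u)
    have hu0 : 0 ≤ u := hc.le.trans hu.le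
    have hgu : g u ≠ 0 := fun h => hu.not_ge (hc_max ⟨htc.trans hu.le, h⟩)
    rw [← ofReal_integral_eq_lintegral_ofReal (integrable_sq_of_ne_zero hg_zero hB_cov hu0 hgu)
      (ae_of_all _ fun ω => sq_nonneg _), integral_sq_eq_of_cov hg_zero hB_cov hu0]
  have hg_right : Tendsto (fun u => ENNReal.ofReal (g u)) (𝓝[>] c) (𝓝 0) := by
    have h := (hg_cont c hc.le).tendsto.mono_left (nhdsWithin_mono c (Ioi_subset_Ici hc.le))
    simpa [comp_def, show g c = 0 from hgc] using (ENNReal.continuous_ofReal.tendsto _).comp h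
  have hBm : ∀ u, Measurable (B u) := fun u => (hB_meas : Measurable (uncurry B)).of_uncurry_left
  have hfatou := lintegral_ofReal_sq_le_liminf (l := 𝓝[>] c) (P := P) (X := B) (Y := B c) hBm
    (hB_cont.mono fun ω hω => (hω.tendsto c).mono_left nhdsWithin_le_nhds)
  rw [(hg_right.congr' (hvar.mono fun u hu => hu.symm)).liminf_eq, nonpos_iff_eq_zero,
    lintegral_eq_zero_iff ((hBm c).pow_const 2).ennreal_ofReal] at hfatou
  refine not_ae_eq_zero_of_cov hα2 hg_lim hg_zero hB_cov hc (hfatou.mono fun ω hω => ?_)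
  simpa using hω

theorem integrable_sq {α2 : ℝ} (hα2 : 0 < α2) (hg_cont : ContinuousOn g (Ici 0))
    (hg_zero : g 0 = 0) (hg_lim : Tendsto g atTop (𝓝 α2))
    (hB_meas : Measurable fun p : ℝ × Ω => B p.1 p.2) (hB_cont : ∀ᵐ ω ∂P, Continuous fun t => B t ω)
    (hB_zero : ∀ ω, B 0 ω = 0)
    (hB_cov : ∀ s, 0 ≤ s → ∀ t, 0 ≤ t → ∫ ω, B s ω * B t ω ∂P = (g t + g s - g |t - s|) / 2)
    {t : ℝ} (ht : 0 ≤ t) : Integrable (fun ω => B t ω ^ 2) P := by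
  rcases ht.eq_or_lt with rfl | ht
  · simp [hB_zero]
  · exact integrable_sq_of_ne_zero hg_zero hB_cov ht.le
      (variance_ne_zero hα2 hg_cont hg_zero hg_lim hB_meas hB_cont hB_cov ht)

theorem lintegral_enorm_mul_le {C : ℝ} (hg_le : ∀ t, 0 ≤ t → g t ≤ C) (hg_zero : g 0 = 0)
    (hB_cov : ∀ s, 0 ≤ s → ∀ t, 0 ≤ t → ∫ ω, B s ω * B t ω ∂P = (g t + g s - g |t - s|) / 2)
    (hB_sq : ∀ t, 0 ≤ t → Integrable (fun ω => B t ω ^ 2) P) {t s : ℝ} (ht : 0 ≤ t) (hs : 0 ≤ s) :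
    ∫⁻ ω, ‖B t ω * B s ω‖ₑ ∂P ≤ ENNReal.ofReal C := by
  have hint : Integrable (fun ω => (B t ω ^ 2 + B s ω ^ 2) / 2) P :=
    ((hB_sq t ht).add (hB_sq s hs)).div_const 2
  calc ∫⁻ ω, ‖B t ω * B s ω‖ₑ ∂P ≤ ∫⁻ ω, ENNReal.ofReal ((B t ω ^ 2 + B s ω ^ 2) / 2) ∂P := by
        refine lintegral_mono fun ω => ?_
        rw [Real.enorm_eq_ofReal_abs]
        refine ENNReal.ofReal_le_ofReal ?_
        nlinarith [sq_abs (B t ω), sq_abs (B s ω), abs_mul (B t ω) (B s ω),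
          sq_nonneg (|B t ω| - |B s ω|)]
    _ = ENNReal.ofReal ((g t + g s) / 2) := by
        rw [← ofReal_integral_eq_lintegral_ofReal hint (ae_of_all _ fun ω => by positivity),
          integral_div, integral_add (hB_sq t ht) (hB_sq s hs),
          integral_sq_eq_of_cov hg_zero hB_cov ht, integral_sq_eq_of_cov hg_zero hB_cov hs]
    _ ≤ ENNReal.ofReal C := ENNReal.ofReal_le_ofReal (by linarith [hg_le t ht, hg_le s hs])

theorem lintegral_enorm_exp_mul_le {C : ℝ}
    (hL1 : ∀ s, 0 ≤ s → ∀ t, 0 ≤ t → ∫⁻ ω, ‖B s ω * B t ω‖ₑ ∂P ≤ ENNReal.ofReal C)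
    {b T t s : ℝ} (ht : t ∈ Icc 0 T) (hs : s ∈ Icc 0 T) :
    ∫⁻ ω, ‖exp (-b * t) * B t ω * (exp (b * s) * B s ω)‖ₑ ∂P
      ≤ ENNReal.ofReal (exp (|b| * T)) * ENNReal.ofReal C := by
  have hw : exp (-b * t) * exp (b * s) ≤ exp (|b| * T) := by
    rw [← exp_add, exp_le_exp]
    have : |s - t| ≤ T := abs_sub_le_iff.2 ⟨by linarith [ht.1, hs.2], by linarith [ht.2, hs.1]⟩
    nlinarith [le_abs_self (b * (s - t)), abs_mul b (s - t), abs_nonneg b]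
  calc ∫⁻ ω, ‖exp (-b * t) * B t ω * (exp (b * s) * B s ω)‖ₑ ∂P
      = ∫⁻ ω, ‖exp (-b * t) * exp (b * s)‖ₑ * ‖B t ω * B s ω‖ₑ ∂P :=
        lintegral_congr fun ω => by rw [← enorm_mul, mul_mul_mul_comm]
    _ = ‖exp (-b * t) * exp (b * s)‖ₑ * ∫⁻ ω, ‖B t ω * B s ω‖ₑ ∂P :=
        lintegral_const_mul' _ _ enorm_ne_top
    _ ≤ _ := by
        rw [Real.enorm_of_nonneg (by positivity)]
        exact mul_le_mul' (ENNReal.ofReal_le_ofReal hw) (hL1 t ht.1 s hs.1)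

theorem integral_mul_sub_expAverage_eq [SFinite P] {R : ℝ → ℝ → ℝ} {C : ℝ}
    (hB_meas : Measurable fun p : ℝ × Ω => B p.1 p.2)
    (hcov : ∀ s, 0 ≤ s → ∀ t, 0 ≤ t → ∫ ω, B s ω * B t ω ∂P = R s t)
    (hL1 : ∀ s, 0 ≤ s → ∀ t, 0 ≤ t → ∫⁻ ω, ‖B s ω * B t ω‖ₑ ∂P ≤ ENNReal.ofReal C)
    (b : ℝ) {T : ℝ} (hT : 0 ≤ T) :
    ∫ ω, (∫ t in 0..T, exp (-b * t) * B t ω) * (B T ω - expAverage b (B · ω) T) ∂P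
      = ∫ t in Ioc 0 T, exp (-b * t) * (R t T - expAverage b (R t) T) := by
  set μ := volume.restrict (Ioc 0 T)
  set X : ℝ → Ω → ℝ := fun t ω => exp (-b * t) * B t ω
  set Y : ℝ → Ω → ℝ := fun s ω => exp (b * s) * B s ω
  have hX : Measurable (uncurry X) :=
    (by fun_prop : Measurable fun p : ℝ × Ω => exp (-b * p.1)).mul hB_meas
  have hY : Measurable (uncurry Y) :=
    (by fun_prop : Measurable fun p : ℝ × Ω => exp (b * p.1)).mul hB_meas
  have hμ : ∀ᵐ t ∂μ, t ∈ Ioc 0 T := ae_restrict_mem measurableSet_Ioc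
  have hδ : ∀ᵐ s ∂(Measure.dirac T), s ∈ Icc 0 T := by
    rw [ae_dirac_eq]
    exact ⟨hT, le_rfl⟩
  have hμ' : ∀ᵐ s ∂μ, s ∈ Icc 0 T := hμ.mono fun s hs => Ioc_subset_Icc_self hs
  have hXY : ∀ ν : Measure ℝ, (∀ᵐ s ∂ν, s ∈ Icc 0 T) → ∀ᵐ t ∂μ, ∀ᵐ s ∂ν,
      ∫⁻ ω, ‖X t ω * Y s ω‖ₑ ∂P ≤ ENNReal.ofReal (exp (|b| * T)) * ENNReal.ofReal C :=
    fun ν hν => hμ.mono fun t ht =>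
      hν.mono fun s hs => lintegral_enorm_exp_mul_le hL1 (Ioc_subset_Icc_self ht) hs
  have hcovXY : ∀ ν : Measure ℝ, (∀ᵐ s ∂ν, s ∈ Icc 0 T) → ∀ t ∈ Ioc 0 T,
      ∫ s, ∫ ω, X t ω * Y s ω ∂P ∂ν = exp (-b * t) * ∫ s, exp (b * s) * R t s ∂ν := by
    intro ν hν t ht
    rw [← integral_const_mul]
    refine integral_congr_ae (hν.mono fun s hs => ?_)
    simp only [X, Y, mul_mul_mul_comm _ (B t _)]
    rw [integral_const_mul, hcov t ht.1.le s hs.1, mul_assoc]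
  have hV : ∀ ω, B T ω - expAverage b (B · ω) T
      = exp (-b * T) * ((∫ s, Y s ω ∂Measure.dirac T) - b * ∫ s, Y s ω ∂μ) := fun ω => by
    rw [integral_dirac, expAverage, intervalIntegral.integral_of_le hT, mul_sub, ← mul_assoc,
      ← exp_add, neg_mul, neg_add_cancel, exp_zero, one_mul]
    ring
  have hE : exp (-b * T) * exp (b * T) = 1 := by rw [← exp_add]; simp
  calc ∫ ω, (∫ t in 0..T, exp (-b * t) * B t ω) * (B T ω - expAverage b (B · ω) T) ∂P
      = exp (-b * T) * ∫ ω, (∫ t, X t ω ∂μ)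
          * ((∫ s, Y s ω ∂Measure.dirac T) - b * ∫ s, Y s ω ∂μ) ∂P := by
        rw [← integral_const_mul]
        congr 1 with ω
        rw [intervalIntegral.integral_of_le hT, hV, mul_left_comm]
    _ = ∫ t in Ioc 0 T, exp (-b * T) * ((∫ s, ∫ ω, X t ω * Y s ω ∂P ∂Measure.dirac T)
          - b * ∫ s, ∫ ω, X t ω * Y s ω ∂P ∂μ) := by
        rw [integral_integral_mul_sub_integral hX hY (by finiteness) (hXY _ hδ) (hXY _ hμ'),
          integral_const_mul]
    _ = ∫ t in Ioc 0 T, exp (-b * t) * (R t T - expAverage b (R t) T) := by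
        refine integral_congr_ae (hμ.mono fun t ht => ?_)
        simp only
        rw [hcovXY _ hδ t ht, hcovXY _ hμ' t ht, integral_dirac, expAverage,
          intervalIntegral.integral_of_le hT]
        linear_combination (exp (-b * t) * R t T) * hE

end StationaryIncrements

theorem cov_ZV_limit_general
    {Ω : Type*} [MeasurableSpace Ω] (P : Measure Ω) [IsProbabilityMeasure P]
    (b α2 : ℝ) (hb : 0 < b) (hα2 : 0 < α2)
    (g : ℝ → ℝ)
    (hg_cont : ContinuousOn g (Set.Ici 0))
    (hg_bdd : ∃ C, ∀ t, 0 ≤ t → |g t| ≤ C)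
    (hg_zero : g 0 = 0)
    (hg_lim : Tendsto g atTop (nhds α2))
    (B : ℝ → Ω → ℝ)
    (hB_meas : Measurable fun p : ℝ × Ω => B p.1 p.2)
    (hB_cont : ∀ᵐ ω ∂P, Continuous fun t => B t ω)
    (hB_zero : ∀ ω, B 0 ω = 0)
    (hB_cov : ∀ s, 0 ≤ s → ∀ t, 0 ≤ t →
      ∫ ω, B s ω * B t ω ∂P = (g t + g s - g |t - s|) / 2)
    (Z : ℝ → Ω → ℝ)
    (hZ : ∀ T ω, Z T ω = ∫ t in (0:ℝ)..T, Real.exp (-b * t) * B t ω)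
    (U : ℝ → Ω → ℝ)
    (hU : ∀ T ω, U T ω = Real.exp (-b * T) * ∫ t in (0:ℝ)..T, Real.exp (b * t) * B t ω)
    (V : ℝ → Ω → ℝ)
    (hV : ∀ T ω, V T ω = B T ω - b * U T ω)
    :
    Tendsto (fun T => ∫ ω, Z T ω * V T ω ∂P) atTop (nhds 0) := by
  obtain ⟨C, hC⟩ := hg_bdd
  have hR := continuous_covKernel hg_cont
  have hL1 : ∀ s, 0 ≤ s → ∀ t, 0 ≤ t → ∫⁻ ω, ‖B s ω * B t ω‖ₑ ∂P ≤ ENNReal.ofReal C :=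
    fun s hs t ht => lintegral_enorm_mul_le (fun t ht => (le_abs_self _).trans (hC t ht)) hg_zero
      hB_cov (fun _ => integrable_sq hα2 hg_cont hg_zero hg_lim hB_meas hB_cont hB_zero hB_cov)
      hs ht
  have hZV : ∀ T, 0 ≤ T → ∫ ω, Z T ω * V T ω ∂P
      = ∫ t in Ioc 0 T, exp (-b * t) * (covKernel g t T - expAverage b (covKernel g t) T) := by
    intro T hT
    simp only [hZ, hV, hU, ← mul_assoc]
    exact integral_mul_sub_expAverage_eq hB_meas
      (fun s hs t ht => by rw [hB_cov s hs t ht, covKernel_of_nonneg hs ht]) hL1 b hT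
  have hlim := tendsto_setIntegral_Ioc_mul (exp_neg_integrableOn_Ioi 0 hb) (H := 0)
    (fun T => ((hR.comp (continuous_id.prodMk continuous_const)).sub
      (continuous_expAverage hR b T)).aestronglyMeasurable)
    (fun T t ht => (abs_sub _ _).trans (add_le_add (abs_covKernel_le hC t T)
      (abs_expAverage_le hb (ht.1.le.trans ht.2) fun s _ => abs_covKernel_le hC t s)))
    (fun t _ => by
      simpa using (tendsto_covKernel hg_lim t).sub (tendsto_expAverage hb (f := covKernel g t)
        (hR.comp (continuous_const.prodMk continuous_id)) (fun s _ => abs_covKernel_le hC t s)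
        (tendsto_covKernel hg_lim t)))
  simp only [Pi.zero_apply, mul_zero, integral_zero] at hlim
  exact hlim.congr' ((eventually_ge_atTop 0).mono fun T hT => (hZV T hT).symm)

theorem cov_ZV_limit
    {Ω : Type*} [MeasurableSpace Ω] (P : Measure Ω) [IsProbabilityMeasure P]
    (b α2 β2 : ℝ) (hb : 0 < b) (hα2 : 0 < α2)
    (g : ℝ → ℝ)
    (hg_cont : ContinuousOn g (Set.Ici 0))
    (hg_bdd : ∃ C, ∀ t, 0 ≤ t → |g t| ≤ C)
    (hg_nonneg : ∀ t, 0 ≤ t → 0 ≤ g t)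
    (hg_zero : g 0 = 0)
    (hg_lim : Tendsto g atTop (nhds α2))
    (hβ2 : β2 = b / 2 * ∫ u in Set.Ioi (0:ℝ), Real.exp (-b * u) * g u)
    (B : ℝ → Ω → ℝ)
    (hB_meas : Measurable fun p : ℝ × Ω => B p.1 p.2)
    (hB_cont : ∀ᵐ ω ∂P, Continuous fun t => B t ω)
    (hB_zero : ∀ ω, B 0 ω = 0)
    (hB_mean : ∀ t, 0 ≤ t → ∫ ω, B t ω ∂P = 0)
    (hB_cov : ∀ s, 0 ≤ s → ∀ t, 0 ≤ t →
      ∫ ω, B s ω * B t ω ∂P = (g t + g s - g |t - s|) / 2)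
    (Z : ℝ → Ω → ℝ)
    (hZ : ∀ T ω, Z T ω = ∫ t in (0:ℝ)..T, Real.exp (-b * t) * B t ω)
    (U : ℝ → Ω → ℝ)
    (hU : ∀ T ω, U T ω = Real.exp (-b * T) * ∫ t in (0:ℝ)..T, Real.exp (b * t) * B t ω)
    (V : ℝ → Ω → ℝ)
    (hV : ∀ T ω, V T ω = B T ω - b * U T ω)
    :
    Tendsto (fun T => ∫ ω, Z T ω * V T ω ∂P) atTop (nhds 0) :=
  cov_ZV_limit_general P b α2 hb hα2 g hg_cont hg_bdd hg_zero hg_lim B hB_meas hB_cont hB_zero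
    hB_cov Z hZ U hU V hV
end

section
/- lim_{T → ∞} E[B_T U_T] = (α² − β²)/b. -/
/-!
Fubini and the covariance formula give
`E[B_T U_T] = e^{-bT} ∫₀^T e^{bt} (g(T) + g(t) - g(T - t)) / 2 dt`; after substituting
`u = T - t` the three terms are exponentially weighted averages tending to `α² / (2b)`,
`α² / (2b)` and `-½ ∫₀^∞ e^{-bu} g(u) du = -β² / b`.

Fubini needs `B_t ∈ L²`, which the covariance identity yields only where `g(t) ≠ 0`. But `g` has
no zero `t > 0`: if `c > 0` were its largest zero, Cauchy–Schwarz applied to `B_v` as `v ↓ c`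
would give `g(t) = g(|t - c|)` whenever `g(t) ≠ 0`, and `t = 2c` contradicts this.
-/

open MeasureTheory Filter Set Topology

section L2

variable {α : Type*} [MeasurableSpace α] {μ : Measure α} {f g : α → ℝ}

theorem sq_integral_mul_le_integral_sq_mul_integral_sq (hf : MemLp f 2 μ) (hg : MemLp g 2 μ) :
    (∫ a, f a * g a ∂μ) ^ 2 ≤ (∫ a, f a ^ 2 ∂μ) * ∫ a, g a ^ 2 ∂μ := by
  have hfg : Integrable (fun a => f a * g a) μ := hf.integrable_mul hg
  have hquad : ∀ x : ℝ, 0 ≤ (∫ a, g a ^ 2 ∂μ) * (x * x) + 2 * (∫ a, f a * g a ∂μ) * x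
      + ∫ a, f a ^ 2 ∂μ := by
    intro x
    have hexpand : ∫ a, (f a + x * g a) ^ 2 ∂μ = (∫ a, g a ^ 2 ∂μ) * (x * x)
        + 2 * (∫ a, f a * g a ∂μ) * x + ∫ a, f a ^ 2 ∂μ := by
      have h : (fun a => (f a + x * g a) ^ 2)
          = fun a => (x * x) * g a ^ 2 + (2 * x) * (f a * g a) + f a ^ 2 := by
        funext a; ring
      have hsum : Integrable (fun a => (x * x) * g a ^ 2 + (2 * x) * (f a * g a)) μ :=
        (hg.integrable_sq.const_mul _).add (hfg.const_mul _)
      rw [h, integral_add hsum hf.integrable_sq,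
        integral_add (hg.integrable_sq.const_mul _) (hfg.const_mul _), integral_const_mul,
        integral_const_mul]
      ring
    exact hexpand ▸ integral_nonneg fun a => sq_nonneg _
  have := discrim_le_zero hquad
  rw [discrim] at this
  linarith

theorem integral_abs_mul_le_of_memLp (hf : MemLp f 2 μ) (hg : MemLp g 2 μ) :
    ∫ a, |f a * g a| ∂μ ≤ (∫ a, f a ^ 2 ∂μ + ∫ a, g a ^ 2 ∂μ) / 2 := by
  rw [← integral_add hf.integrable_sq hg.integrable_sq, ← integral_div]
  refine integral_mono (hf.integrable_mul hg).abs
    ((hf.integrable_sq.add hg.integrable_sq).div_const 2) fun a => ?_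
  have := two_mul_le_add_sq |f a| |g a|
  rw [sq_abs, sq_abs] at this
  simp only [abs_mul]
  linarith

end L2

theorem integral_mul_intervalIntegral_comm {Ω : Type*} [MeasurableSpace Ω] {P : Measure Ω}
    [SFinite P] {B : ℝ → Ω → ℝ} (hB : Measurable (Function.uncurry B)) {X : Ω → ℝ}
    (hX : AEStronglyMeasurable X P) {w : ℝ → ℝ} (hw : Continuous w) {T K : ℝ} (hT : 0 ≤ T)
    (hint : ∀ t ∈ Ioc 0 T, Integrable (fun ω => B t ω * X ω) P)
    (hK : ∀ t ∈ Ioc 0 T, ∫ ω, |B t ω * X ω| ∂P ≤ K) :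
    ∫ ω, X ω * (∫ t in (0)..T, w t * B t ω) ∂P = ∫ t in (0)..T, w t * ∫ ω, B t ω * X ω ∂P := by
  obtain ⟨M, hM⟩ := isCompact_Icc.exists_bound_of_continuousOn (hw.continuousOn (s := Icc 0 T))
  set F : ℝ → Ω → ℝ := fun t ω => w t * (B t ω * X ω)
  have hF_meas :
      AEStronglyMeasurable (Function.uncurry F) ((volume.restrict (Ioc 0 T)).prod P) :=
    (hw.measurable.comp measurable_fst).aestronglyMeasurable.mul
      (hB.aestronglyMeasurable.mul hX.comp_snd)
  have hF : Integrable (Function.uncurry F) ((volume.restrict (Ioc 0 T)).prod P) := by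
    refine (integrable_prod_iff hF_meas).2 ⟨?_, ?_⟩
    · filter_upwards [ae_restrict_mem measurableSet_Ioc] with t ht
      exact (hint t ht).const_mul (w t)
    · refine Integrable.mono' (integrable_const (M * K)) hF_meas.norm.integral_prod_right' ?_
      filter_upwards [ae_restrict_mem measurableSet_Ioc] with t ht
      have hnorm : ∫ ω, ‖F t ω‖ ∂P = ‖w t‖ * ∫ ω, |B t ω * X ω| ∂P := by
        simp only [F, norm_mul, Real.norm_eq_abs, ← integral_const_mul, abs_mul]
      rw [Real.norm_of_nonneg (integral_nonneg fun _ => norm_nonneg _)]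
      have hwt := hM t (Ioc_subset_Icc_self ht)
      exact hnorm ▸ mul_le_mul hwt (hK t ht) (integral_nonneg fun _ => abs_nonneg _)
        ((norm_nonneg _).trans hwt)
  simp only [intervalIntegral.integral_of_le hT, ← integral_const_mul]
  calc ∫ ω, (∫ t in Ioc 0 T, X ω * (w t * B t ω)) ∂P
      = ∫ ω, (∫ t in Ioc 0 T, F t ω) ∂P := by
        congr with ω; congr with t; ring
    _ = ∫ t in Ioc 0 T, ∫ ω, F t ω ∂P := (integral_integral_swap hF).symm

def HasIncrementCovariance {Ω : Type*} [MeasurableSpace Ω] (P : Measure Ω) (B : ℝ → Ω → ℝ)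
    (g : ℝ → ℝ) : Prop :=
  ∀ s, 0 ≤ s → ∀ t, 0 ≤ t → ∫ ω, B s ω * B t ω ∂P = (g t + g s - g |t - s|) / 2

namespace HasIncrementCovariance

variable {Ω : Type*} [MeasurableSpace Ω] {P : Measure Ω} {B : ℝ → Ω → ℝ} {g : ℝ → ℝ}

theorem integral_sq (hcov : HasIncrementCovariance P B g) (hg0 : g 0 = 0) {t : ℝ} (ht : 0 ≤ t) :
    ∫ ω, B t ω ^ 2 ∂P = g t := by
  simp only [sq, hcov t ht t ht, sub_self, abs_zero, hg0]
  ring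

/-- A non-integrable function has Bochner integral `0`, so `∫ B t ^ 2 = g t` forces
integrability of `B t ^ 2` only when `g t ≠ 0`. -/
theorem memLp_two (hcov : HasIncrementCovariance P B g) (hg0 : g 0 = 0) {t : ℝ} (ht : 0 ≤ t)
    (hB : AEStronglyMeasurable (B t) P) (hgt : g t ≠ 0) : MemLp (B t) 2 P := by
  rw [memLp_two_iff_integrable_sq hB]
  by_contra hint
  exact hgt (hcov.integral_sq hg0 ht ▸ integral_undef hint)

theorem eq_comp_abs_sub (hcov : HasIncrementCovariance P B g) (hg0 : g 0 = 0)
    (hB : ∀ t, AEStronglyMeasurable (B t) P) (hg : ContinuousOn g (Ici 0)) {c t : ℝ}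
    (hc : 0 ≤ c) (hgc : g c = 0) (hnz : ∀ᶠ v in 𝓝[>] c, g v ≠ 0) (ht : 0 ≤ t) (hgt : g t ≠ 0) :
    g t = g |t - c| := by
  have hle : 𝓝[>] c ≤ 𝓝[Ici 0] c := nhdsWithin_mono _ fun v hv => hc.trans hv.le
  have hcov_cont : ContinuousOn (fun v => ((g t + g v - g |t - v|) / 2) ^ 2) (Ici 0) :=
    (((continuousOn_const.add hg).sub (hg.comp (continuous_const.sub continuous_id).abs.continuousOn
      fun v _ => abs_nonneg (t - v))).div_const 2).pow 2
  have hlim_cov := ((hcov_cont c hc).tendsto).mono_left hle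
  have hlim_bound : Tendsto (fun v => g v * g t) (𝓝[>] c) (𝓝 0) := by
    simpa [hgc] using (((hg c hc).tendsto.mono_left hle).mul_const (g t))
  have hCS : ∀ᶠ v in 𝓝[>] c, ((g t + g v - g |t - v|) / 2) ^ 2 ≤ g v * g t := by
    filter_upwards [hnz, self_mem_nhdsWithin] with v hgv hv
    have hv0 : 0 ≤ v := hc.trans hv.le
    rw [← hcov v hv0 t ht, ← hcov.integral_sq hg0 hv0, ← hcov.integral_sq hg0 ht]
    exact sq_integral_mul_le_integral_sq_mul_integral_sq (hcov.memLp_two hg0 hv0 (hB v) hgv)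
      (hcov.memLp_two hg0 ht (hB t) hgt)
  have hsq := le_of_tendsto_of_tendsto hlim_cov hlim_bound hCS
  rw [hgc] at hsq
  nlinarith [sq_nonneg ((g t + 0 - g |t - c|) / 2)]

theorem ne_zero_of_pos (hcov : HasIncrementCovariance P B g) (hg0 : g 0 = 0)
    (hB : ∀ t, AEStronglyMeasurable (B t) P) (hg : ContinuousOn g (Ici 0)) {α : ℝ}
    (hlim : Tendsto g atTop (𝓝 α)) (hα : α ≠ 0) {t : ℝ} (ht : 0 < t) : g t ≠ 0 := by
  set Z := Ici (0 : ℝ) ∩ g ⁻¹' {0}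
  have hZ_closed : IsClosed Z := hg.preimage_isClosed_of_isClosed isClosed_Ici isClosed_singleton
  have hZ_bdd : BddAbove Z := by
    obtain ⟨R, hR⟩ := eventually_atTop.1 (hlim.eventually_ne hα)
    exact ⟨R, fun s hs => not_lt.1 fun hRs => hR s hRs.le hs.2⟩
  set c := sSup Z
  have hcZ : c ∈ Z := hZ_closed.csSup_mem ⟨0, self_mem_Ici, hg0⟩ hZ_bdd
  have hnz : ∀ v, c < v → g v ≠ 0 := fun v hv hgv =>
    (le_csSup hZ_bdd ⟨hcZ.1.trans hv.le, hgv⟩).not_gt hv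
  intro hgt
  have hc : 0 < c := ht.trans_le (le_csSup hZ_bdd ⟨ht.le, hgt⟩)
  have h2c := hcov.eq_comp_abs_sub hg0 hB hg hcZ.1 hcZ.2 (eventually_nhdsWithin_of_forall hnz)
    (by linarith) (hnz (2 * c) (by linarith))
  rw [show 2 * c - c = c by ring, abs_of_pos hc, hcZ.2] at h2c
  exact hnz (2 * c) (by linarith) h2c

theorem integral_mul_intervalIntegral [SFinite P] (hcov : HasIncrementCovariance P B g)
    (hg0 : g 0 = 0) (hB : Measurable (Function.uncurry B)) (hL2 : ∀ t, 0 < t → MemLp (B t) 2 P)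
    {C : ℝ} (hC : ∀ t, 0 ≤ t → |g t| ≤ C) {w : ℝ → ℝ} (hw : Continuous w) {T : ℝ} (hT : 0 < T) :
    ∫ ω, B T ω * (∫ t in (0)..T, w t * B t ω) ∂P
      = ∫ t in (0)..T, w t * ((g T + g t - g (T - t)) / 2) := by
  have hbound : ∀ t ∈ Ioc 0 T, ∫ ω, |B t ω * B T ω| ∂P ≤ C := by
    intro t ht
    have := integral_abs_mul_le_of_memLp (hL2 t ht.1) (hL2 T hT)
    rw [hcov.integral_sq hg0 ht.1.le, hcov.integral_sq hg0 hT.le] at this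
    linarith [(abs_le.1 (hC t ht.1.le)).2, (abs_le.1 (hC T hT.le)).2]
  rw [integral_mul_intervalIntegral_comm hB (hL2 T hT).1 hw hT.le
    (fun t ht => (hL2 t ht.1).integrable_mul (hL2 T hT)) hbound]
  refine intervalIntegral.integral_congr fun t ht => ?_
  rw [uIcc_of_le hT.le] at ht
  simp only [hcov t ht.1 T hT.le, abs_of_nonneg (sub_nonneg.2 ht.2)]

end HasIncrementCovariance

namespace Real

theorem exp_neg_mul_intervalIntegral_exp_mul_comp_sub (b T : ℝ) (f : ℝ → ℝ) :
    exp (-b * T) * ∫ t in (0)..T, exp (b * t) * f (T - t) = ∫ u in (0)..T, exp (-b * u) * f u := by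
  rw [← intervalIntegral.integral_const_mul]
  have h : ∀ t, exp (-b * T) * (exp (b * t) * f (T - t)) = exp (-b * (T - t)) * f (T - t) := by
    intro t
    rw [← mul_assoc, ← exp_add]
    ring_nf
  simp only [h, intervalIntegral.integral_comp_sub_left (fun u => exp (-b * u) * f u), sub_self,
    sub_zero]

theorem integrableOn_exp_neg_mul_of_bounded {b C : ℝ} (hb : 0 < b) {h : ℝ → ℝ}
    (hh : AEStronglyMeasurable h (volume.restrict (Ioi 0))) (hC : ∀ t, 0 ≤ t → |h t| ≤ C) :
    IntegrableOn (fun u => exp (-b * u) * h u) (Ioi 0) := by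
  refine Integrable.mono' ((exp_neg_integrableOn_Ioi 0 hb).mul_const C)
    ((continuous_exp.comp (continuous_const.mul continuous_id)).aestronglyMeasurable.mul hh) ?_
  filter_upwards [ae_restrict_mem measurableSet_Ioi] with u hu
  rw [norm_mul, norm_of_nonneg (exp_pos _).le]
  exact mul_le_mul_of_nonneg_left (hC u (le_of_lt hu)) (exp_pos _).le

theorem tendsto_exp_neg_mul_intervalIntegral_exp_mul {b L : ℝ} (hb : 0 < b) {h : ℝ → ℝ}
    (hh : ContinuousOn h (Ici 0)) (hbdd : ∃ C, ∀ t, 0 ≤ t → |h t| ≤ C)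
    (hlim : Tendsto h atTop (𝓝 L)) :
    Tendsto (fun T => exp (-b * T) * ∫ t in (0)..T, exp (b * t) * h t) atTop (𝓝 (L / b)) := by
  obtain ⟨C, hC⟩ := hbdd
  have hsubst : ∀ T, 0 ≤ T →
      ∫ u in Ioi 0, (Ioc 0 T).indicator (fun u => exp (-b * u) * h (T - u)) u
        = exp (-b * T) * ∫ t in (0)..T, exp (b * t) * h t := by
    intro T hT
    rw [integral_indicator measurableSet_Ioc, Measure.restrict_restrict measurableSet_Ioc,
      inter_eq_self_of_subset_left Ioc_subset_Ioi_self, ← intervalIntegral.integral_of_le hT,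
      ← exp_neg_mul_intervalIntegral_exp_mul_comp_sub]
    simp only [sub_sub_cancel]
  have hlimit : ∫ u in Ioi 0, exp (-b * u) * L = L / b := by
    rw [integral_mul_const, integral_exp_mul_Ioi (neg_lt_zero.2 hb), mul_zero, exp_zero]
    field_simp
  have hdct : Tendsto (fun T => ∫ u in Ioi 0, (Ioc 0 T).indicator
      (fun u => exp (-b * u) * h (T - u)) u) atTop (𝓝 (∫ u in Ioi 0, exp (-b * u) * L)) := by
    refine tendsto_integral_filter_of_dominated_convergence (fun u => exp (-b * u) * C) ?_ ?_
      ((exp_neg_integrableOn_Ioi 0 hb).mul_const C) ?_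
    · refine Eventually.of_forall fun T => ?_
      rw [aestronglyMeasurable_indicator_iff measurableSet_Ioc,
        Measure.restrict_restrict measurableSet_Ioc,
        inter_eq_self_of_subset_left Ioc_subset_Ioi_self]
      exact ((continuous_exp.comp (continuous_const.mul continuous_id)).continuousOn.mul
        (hh.comp (continuous_const.sub continuous_id).continuousOn
          fun u hu => sub_nonneg.2 hu.2)).aestronglyMeasurable measurableSet_Ioc
    · refine Eventually.of_forall fun T => Eventually.of_forall fun u => ?_
      by_cases hu : u ∈ Ioc 0 T
      · rw [indicator_of_mem hu, norm_mul, norm_of_nonneg (exp_pos _).le]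
        exact mul_le_mul_of_nonneg_left (hC _ (sub_nonneg.2 hu.2)) (exp_pos _).le
      · rw [indicator_of_notMem hu, norm_zero]
        exact mul_nonneg (exp_pos _).le ((abs_nonneg _).trans (hC 0 le_rfl))
    · filter_upwards [ae_restrict_mem measurableSet_Ioi] with u hu
      refine Tendsto.congr' ?_ ((hlim.comp (tendsto_atTop_add_const_right _ (-u)
        tendsto_id)).const_mul (exp (-b * u)))
      filter_upwards [eventually_ge_atTop u] with T hT
      rw [indicator_of_mem (show u ∈ Ioc 0 T from ⟨hu, hT⟩), Function.comp_apply, id,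
        sub_eq_add_neg]
  rw [← hlimit]
  exact hdct.congr' (eventually_atTop.2 ⟨0, hsubst⟩)

theorem tendsto_exp_neg_mul_intervalIntegral_exp_mul_increment {b α : ℝ} (hb : 0 < b)
    {g : ℝ → ℝ} (hg : ContinuousOn g (Ici 0)) (hbdd : ∃ C, ∀ t, 0 ≤ t → |g t| ≤ C)
    (hlim : Tendsto g atTop (𝓝 α)) :
    Tendsto (fun T => exp (-b * T) * ∫ t in (0)..T, exp (b * t) * ((g T + g t - g (T - t)) / 2))
      atTop (𝓝 ((α - b / 2 * ∫ u in Ioi 0, exp (-b * u) * g u) / b)) := by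
  have hexp : Continuous fun t => exp (b * t) := by fun_prop
  have hsplit : ∀ T, 0 ≤ T →
      g T / 2 * (exp (-b * T) * ∫ t in (0)..T, exp (b * t) * 1)
        + (exp (-b * T) * ∫ t in (0)..T, exp (b * t) * g t) / 2
        - (∫ u in (0)..T, exp (-b * u) * g u) / 2
      = exp (-b * T) * ∫ t in (0)..T, exp (b * t) * ((g T + g t - g (T - t)) / 2) := by
    intro T hT
    have hint₁ : IntervalIntegrable (fun t => exp (b * t) * g t) volume 0 T :=
      (hexp.continuousOn.mul (hg.mono Icc_subset_Ici_self)).intervalIntegrable_of_Icc hT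
    have hint₂ : IntervalIntegrable (fun t => exp (b * t) * g (T - t)) volume 0 T :=
      (hexp.continuousOn.mul (hg.comp (continuous_const.sub continuous_id).continuousOn
        fun t ht => sub_nonneg.2 ht.2)).intervalIntegrable_of_Icc hT
    have hintegrand : (fun t => exp (b * t) * ((g T + g t - g (T - t)) / 2))
        = fun t => g T / 2 * (exp (b * t) * 1) + (exp (b * t) * g t) / 2
          - (exp (b * t) * g (T - t)) / 2 := by
      funext t; ring
    rw [hintegrand, intervalIntegral.integral_sub (((hexp.intervalIntegrable 0 T).mul_const 1
      |>.const_mul _).add (hint₁.div_const _)) (hint₂.div_const _),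
      intervalIntegral.integral_add ((hexp.intervalIntegrable 0 T).mul_const 1 |>.const_mul _)
        (hint₁.div_const _), intervalIntegral.integral_const_mul, intervalIntegral.integral_div,
      intervalIntegral.integral_div, ← exp_neg_mul_intervalIntegral_exp_mul_comp_sub b T g]
    ring
  obtain ⟨C, hC⟩ := hbdd
  have hconst := tendsto_exp_neg_mul_intervalIntegral_exp_mul hb (h := fun _ => 1)
    continuousOn_const ⟨1, fun _ _ => by norm_num⟩ tendsto_const_nhds
  have hwhole := tendsto_exp_neg_mul_intervalIntegral_exp_mul hb hg ⟨C, hC⟩ hlim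
  have htail := intervalIntegral_tendsto_integral_Ioi 0
    (integrableOn_exp_neg_mul_of_bounded hb
      ((hg.mono Ioi_subset_Ici_self).aestronglyMeasurable measurableSet_Ioi) hC) tendsto_id
  have hsum := (((hlim.div_const 2).mul hconst).add (hwhole.div_const 2)).sub (htail.div_const 2)
  rw [show α / 2 * (1 / b) + α / b / 2 - (∫ u in Ioi 0, exp (-b * u) * g u) / 2
    = (α - b / 2 * ∫ u in Ioi 0, exp (-b * u) * g u) / b by field_simp; ring] at hsum
  exact hsum.congr' (eventually_atTop.2 ⟨0, hsplit⟩)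

end Real

theorem cov_BU_limit_general
    {Ω : Type*} [MeasurableSpace Ω] (P : Measure Ω) [IsProbabilityMeasure P]
    (b α2 β2 : ℝ) (hb : 0 < b) (hα2 : 0 < α2)
    (g : ℝ → ℝ)
    (hg_cont : ContinuousOn g (Set.Ici 0))
    (hg_bdd : ∃ C, ∀ t, 0 ≤ t → |g t| ≤ C)
    (hg_zero : g 0 = 0)
    (hg_lim : Tendsto g atTop (nhds α2))
    (hβ2 : β2 = b / 2 * ∫ u in Set.Ioi (0:ℝ), Real.exp (-b * u) * g u)
    (B : ℝ → Ω → ℝ)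
    (hB_meas : Measurable fun p : ℝ × Ω => B p.1 p.2)
    (hB_cov : ∀ s, 0 ≤ s → ∀ t, 0 ≤ t →
      ∫ ω, B s ω * B t ω ∂P = (g t + g s - g |t - s|) / 2)
    (U : ℝ → Ω → ℝ)
    (hU : ∀ T ω, U T ω = Real.exp (-b * T) * ∫ t in (0:ℝ)..T, Real.exp (b * t) * B t ω)
    :
    Tendsto (fun T => ∫ ω, B T ω * U T ω ∂P) atTop (nhds ((α2 - β2) / b)) := by
  have hcov : HasIncrementCovariance P B g := hB_cov
  have hB : ∀ t, AEStronglyMeasurable (B t) P := fun t =>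
    (hB_meas.comp measurable_prodMk_left).aestronglyMeasurable
  have hL2 : ∀ t, 0 < t → MemLp (B t) 2 P := fun t ht =>
    hcov.memLp_two hg_zero ht.le (hB t) (hcov.ne_zero_of_pos hg_zero hB hg_cont hg_lim hα2.ne' ht)
  obtain ⟨C, hC⟩ := hg_bdd
  have hcross : ∀ T, 0 < T → Real.exp (-b * T) *
        ∫ t in (0)..T, Real.exp (b * t) * ((g T + g t - g (T - t)) / 2)
      = ∫ ω, B T ω * U T ω ∂P := by
    intro T hT
    simp only [hU, mul_left_comm (B T _), integral_const_mul]
    rw [hcov.integral_mul_intervalIntegral hg_zero hB_meas hL2 hC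
      (w := fun t => Real.exp (b * t)) (by fun_prop) hT]
  rw [hβ2]
  exact (Real.tendsto_exp_neg_mul_intervalIntegral_exp_mul_increment hb hg_cont ⟨C, hC⟩
    hg_lim).congr' ((eventually_gt_atTop 0).mono hcross)

theorem cov_BU_limit
    {Ω : Type*} [MeasurableSpace Ω] (P : Measure Ω) [IsProbabilityMeasure P]
    (b α2 β2 : ℝ) (hb : 0 < b) (hα2 : 0 < α2)
    (g : ℝ → ℝ)
    (hg_cont : ContinuousOn g (Set.Ici 0))
    (hg_bdd : ∃ C, ∀ t, 0 ≤ t → |g t| ≤ C)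
    (hg_nonneg : ∀ t, 0 ≤ t → 0 ≤ g t)
    (hg_zero : g 0 = 0)
    (hg_lim : Tendsto g atTop (nhds α2))
    (hβ2 : β2 = b / 2 * ∫ u in Set.Ioi (0:ℝ), Real.exp (-b * u) * g u)
    (B : ℝ → Ω → ℝ)
    (hB_meas : Measurable fun p : ℝ × Ω => B p.1 p.2)
    (hB_cont : ∀ᵐ ω ∂P, Continuous fun t => B t ω)
    (hB_zero : ∀ ω, B 0 ω = 0)
    (hB_mean : ∀ t, 0 ≤ t → ∫ ω, B t ω ∂P = 0)
    (hB_cov : ∀ s, 0 ≤ s → ∀ t, 0 ≤ t →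
      ∫ ω, B s ω * B t ω ∂P = (g t + g s - g |t - s|) / 2)
    (U : ℝ → Ω → ℝ)
    (hU : ∀ T ω, U T ω = Real.exp (-b * T) * ∫ t in (0:ℝ)..T, Real.exp (b * t) * B t ω)
    :
    Tendsto (fun T => ∫ ω, B T ω * U T ω ∂P) atTop (nhds ((α2 - β2) / b)) :=
  cov_BU_limit_general P b α2 β2 hb hα2 g hg_cont hg_bdd hg_zero hg_lim hβ2 B hB_meas hB_cov U hU
end

section
/- For every T > 0, E[B_T U_T] = (1/(2b)) g(T) − (1/(2b)) e^{−bT} g(T) + ½ e^{−bT} ∫₀^T e^{bs} g(s) ds − ½ ∫₀^T e^{−bs} g(s) ds. -/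
/-!
Expanding `U_T` and applying Fubini, `E[B_T U_T] = e^{-bT} ∫₀^T e^{bt} E[B_T B_t] dt`, and the
covariance formula turns the right-hand side into exponential integrals of `g`; the term
`g (T - t)` becomes `e^{bT} ∫₀^T e^{-bs} g s ds` under `s = T - t`.

Fubini needs `B_t ∈ L²`; for `t > 0` this follows from `E[B_t²] = g t ≠ 0`, since the Bochner
integral of a non-integrable function is `0`. And `g t ≠ 0`: if `g t = 0`, then on a half-line
`[N, ∞)` where `g ≠ 0` the process is a.s. `t`-periodic, `B (N + k t) = B N`, which forces
`g (k t) = 0` for all large `k`, against `g → α² ≠ 0`.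
-/

open MeasureTheory Filter Real Set

section Fubini

variable {α Ω : Type*} [MeasurableSpace α] [MeasurableSpace Ω]
  {μ : Measure α} {P : Measure Ω} {X : Ω → ℝ} {F : α → Ω → ℝ}

lemma integrable_prod_mul_of_memLp_two [IsFiniteMeasure μ] [SFinite P]
    (hF : Measurable (Function.uncurry F)) (hX : MemLp X 2 P)
    (hF2 : ∀ᵐ a ∂μ, MemLp (F a) 2 P) (hFsq : Integrable (fun a => ∫ ω, F a ω ^ 2 ∂P) μ) :
    Integrable (Function.uncurry fun a ω => X ω * F a ω) (μ.prod P) := by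
  have hmeas : AEStronglyMeasurable (Function.uncurry fun a ω => X ω * F a ω) (μ.prod P) :=
    hX.1.comp_snd.mul hF.aestronglyMeasurable
  refine (integrable_prod_iff hmeas).2 ⟨?_, ?_⟩
  · filter_upwards [hF2] with a ha using hX.integrable_mul (p := 2) (q := 2) ha
  · refine ((integrable_const (∫ ω, X ω ^ 2 ∂P)).add hFsq).div_const 2
      |>.mono' hmeas.norm.integral_prod_right' ?_
    filter_upwards [hF2] with a ha
    have hamgm : ∀ ω, ‖X ω * F a ω‖ ≤ (X ω ^ 2 + F a ω ^ 2) / 2 := fun ω => by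
      rw [norm_mul, Real.norm_eq_abs, Real.norm_eq_abs]
      nlinarith [sq_nonneg (|X ω| - |F a ω|), sq_abs (X ω), sq_abs (F a ω)]
    rw [Real.norm_of_nonneg (integral_nonneg fun _ => norm_nonneg _), Pi.add_apply,
      ← integral_add hX.integrable_sq ha.integrable_sq, ← integral_div]
    exact integral_mono (hX.integrable_mul (p := 2) (q := 2) ha).norm
      ((hX.integrable_sq.add ha.integrable_sq).div_const 2) hamgm

lemma integral_mul_integral_eq_integral_integral_mul [IsFiniteMeasure μ] [SFinite P]
    (hF : Measurable (Function.uncurry F)) (hX : MemLp X 2 P)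
    (hF2 : ∀ᵐ a ∂μ, MemLp (F a) 2 P) (hFsq : Integrable (fun a => ∫ ω, F a ω ^ 2 ∂P) μ) :
    ∫ ω, X ω * ∫ a, F a ω ∂μ ∂P = ∫ a, ∫ ω, X ω * F a ω ∂P ∂μ := by
  simp_rw [← integral_const_mul]
  exact (integral_integral_swap (integrable_prod_mul_of_memLp_two hF hX hF2 hFsq)).symm

end Fubini

/-- The covariance of a process with `B 0 = 0` and stationary increments of variance `g`. -/
def HasStationaryIncrementCov {Ω : Type*} [MeasurableSpace Ω] (P : Measure Ω)
    (B : ℝ → Ω → ℝ) (g : ℝ → ℝ) : Prop :=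
  ∀ s, 0 ≤ s → ∀ t, 0 ≤ t → ∫ ω, B s ω * B t ω ∂P = (g t + g s - g |t - s|) / 2

namespace HasStationaryIncrementCov

variable {Ω : Type*} [MeasurableSpace Ω] {P : Measure Ω} {B : ℝ → Ω → ℝ} {g : ℝ → ℝ} {s t : ℝ}

lemma integral_sq (hB : HasStationaryIncrementCov P B g) (hg0 : g 0 = 0) (ht : 0 ≤ t) :
    ∫ ω, B t ω ^ 2 ∂P = g t := by
  simp_rw [sq, hB t ht t ht, sub_self, abs_zero, hg0]
  ring

lemma memLp_two (hB : HasStationaryIncrementCov P B g) (hg0 : g 0 = 0)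
    (hmeas : AEStronglyMeasurable (B t) P) (ht : 0 ≤ t) (hgt : g t ≠ 0) : MemLp (B t) 2 P :=
  (memLp_two_iff_integrable_sq hmeas).2 <|
    Integrable.of_integral_ne_zero (by rwa [hB.integral_sq hg0 ht])

lemma integral_sub_sq (hB : HasStationaryIncrementCov P B g) (hg0 : g 0 = 0)
    (hs : 0 ≤ s) (ht : 0 ≤ t) (hBs : MemLp (B s) 2 P) (hBt : MemLp (B t) 2 P) :
    ∫ ω, (B t ω - B s ω) ^ 2 ∂P = g |t - s| := by
  have hexpand : ∀ ω, (B t ω - B s ω) ^ 2 = B t ω ^ 2 + B s ω ^ 2 - 2 * (B s ω * B t ω) :=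
    fun ω => by ring
  simp_rw [hexpand]
  rw [integral_sub (f := fun ω => B t ω ^ 2 + B s ω ^ 2) (g := fun ω => 2 * (B s ω * B t ω))
      (hBt.integrable_sq.add hBs.integrable_sq)
      ((hBs.integrable_mul (p := 2) (q := 2) hBt).const_mul 2),
    integral_add hBt.integrable_sq hBs.integrable_sq, integral_const_mul,
    hB.integral_sq hg0 ht, hB.integral_sq hg0 hs, hB s hs t ht]
  ring

lemma apply_ne_zero (hB : HasStationaryIncrementCov P B g) (hg0 : g 0 = 0)
    (hmeas : ∀ t, AEStronglyMeasurable (B t) P) {a : ℝ} (hlim : Tendsto g atTop (nhds a))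
    (ha : a ≠ 0) (ht : 0 < t) : g t ≠ 0 := by
  intro hgt
  obtain ⟨N, hN⟩ : ∃ N, ∀ u ≥ N, 0 ≤ u ∧ g u ≠ 0 :=
    eventually_atTop.1 ((eventually_ge_atTop 0).and (hlim.eventually_ne ha))
  have hL2 : ∀ u ≥ N, MemLp (B u) 2 P := fun u hu =>
    hB.memLp_two hg0 (hmeas u) (hN u hu).1 (hN u hu).2
  have hperiodic : ∀ u ≥ N, B (u + t) =ᵐ[P] B u := fun u hu => by
    have hu' : u + t ≥ N := by linarith
    have hzero : ∫ ω, (B (u + t) ω - B u ω) ^ 2 ∂P = 0 := by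
      rw [hB.integral_sub_sq hg0 (hN u hu).1 (hN _ hu').1 (hL2 u hu) (hL2 _ hu'),
        add_sub_cancel_left, abs_of_pos ht, hgt]
    have hsq_ae := (integral_eq_zero_iff_of_nonneg (fun ω => sq_nonneg _)
      ((hL2 _ hu').sub (hL2 u hu)).integrable_sq).1 hzero
    filter_upwards [hsq_ae] with ω hω
    exact sub_eq_zero.1 (pow_eq_zero_iff two_ne_zero |>.1 hω)
  have hchain : ∀ k : ℕ, B (N + k * t) =ᵐ[P] B N := by
    intro k
    induction k with
    | zero => simp
    | succ k ih =>
      have hle : N + k * t ≥ N := le_add_of_nonneg_right (by positivity)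
      push_cast
      rw [add_one_mul, ← add_assoc]
      exact (hperiodic _ hle).trans ih
  obtain ⟨k, hk⟩ := exists_nat_ge (N / t)
  have hkt : N ≤ k * t := (div_le_iff₀ ht).1 hk
  refine (hN _ hkt).2 ?_
  have hNk : N + k * t ≥ N := le_add_of_nonneg_right (hN _ hkt).1
  have hincr := hB.integral_sub_sq hg0 (hN N le_rfl).1 (hN _ hNk).1 (hL2 N le_rfl) (hL2 _ hNk)
  have hvanish : (fun ω => (B (N + k * t) ω - B N ω) ^ 2) =ᵐ[P] fun _ => 0 := by
    filter_upwards [hchain k] with ω hω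
    simp [hω]
  rwa [integral_congr_ae hvanish, integral_zero, add_sub_cancel_left,
    abs_of_nonneg (hN _ hkt).1, eq_comm] at hincr

lemma integral_mul_intervalIntegral [SFinite P] (hB : HasStationaryIncrementCov P B g)
    (hg0 : g 0 = 0) (hBmeas : Measurable (Function.uncurry B))
    (hL2 : ∀ t, 0 < t → MemLp (B t) 2 P) (hg : ContinuousOn g (Icc 0 t)) {k : ℝ → ℝ}
    (hk : Continuous k) (ht : 0 < t) :
    ∫ ω, B t ω * (∫ s in 0..t, k s * B s ω) ∂P
      = ∫ s in 0..t, k s * ((g s + g t - g (t - s)) / 2) := by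
  have hF : Measurable (Function.uncurry fun s ω => k s * B s ω) :=
    (hk.measurable.comp measurable_fst).mul hBmeas
  have hF2 : ∀ᵐ s ∂volume.restrict (Ioc 0 t), MemLp (fun ω => k s * B s ω) 2 P :=
    (ae_restrict_iff' measurableSet_Ioc).2 <| .of_forall fun s hs => (hL2 s hs.1).const_mul (k s)
  have hFsq : IntegrableOn (fun s => ∫ ω, (k s * B s ω) ^ 2 ∂P) (Ioc 0 t) := by
    refine ((hk.continuousOn.pow 2).mul hg).integrableOn_Icc.mono_set Ioc_subset_Icc_self
      |>.congr_fun (fun s hs => ?_) measurableSet_Ioc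
    simp_rw [mul_pow, integral_const_mul, hB.integral_sq hg0 hs.1.le, Pi.mul_apply, Pi.pow_apply]
  simp_rw [intervalIntegral.integral_of_le ht.le]
  rw [integral_mul_integral_eq_integral_integral_mul hF (hL2 t ht) hF2 hFsq]
  refine setIntegral_congr_fun measurableSet_Ioc fun s hs => ?_
  simp_rw [mul_left_comm (B t _), integral_const_mul]
  rw [hB t ht.le s hs.1.le, abs_sub_comm, abs_of_nonneg (sub_nonneg.2 hs.2)]

end HasStationaryIncrementCov

lemma integral_exp_mul_real {b : ℝ} (hb : b ≠ 0) (x y : ℝ) :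
    ∫ t in x..y, exp (b * t) = (exp (b * y) - exp (b * x)) / b := by
  rw [intervalIntegral.integral_comp_mul_left exp hb, integral_exp, smul_eq_mul, inv_mul_eq_div]

lemma integral_exp_mul_comp_sub (b T : ℝ) (f : ℝ → ℝ) :
    ∫ t in 0..T, exp (b * t) * f (T - t) = exp (b * T) * ∫ s in 0..T, exp (-b * s) * f s := by
  have hshift : ∀ t, exp (b * t) * f (T - t) = exp (b * T) * (exp (-b * (T - t)) * f (T - t)) :=
    fun t => by rw [← mul_assoc, ← exp_add]; ring_nf
  simp_rw [hshift, intervalIntegral.integral_const_mul,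
    intervalIntegral.integral_comp_sub_left (fun s => exp (-b * s) * f s), sub_self, sub_zero]

lemma integral_exp_mul_stationaryIncrementCov {b T : ℝ} (hb : b ≠ 0) {g : ℝ → ℝ}
    (hg : ContinuousOn g (Icc 0 T)) (hT : 0 ≤ T) :
    ∫ t in 0..T, exp (b * t) * ((g t + g T - g (T - t)) / 2)
      = g T / 2 * ((exp (b * T) - 1) / b) + 1 / 2 * (∫ s in 0..T, exp (b * s) * g s)
        - 1 / 2 * (exp (b * T) * ∫ s in 0..T, exp (-b * s) * g s) := by
  have hexp : Continuous fun t => exp (b * t) := by fun_prop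
  have hg' : ContinuousOn g (uIcc 0 T) := by rwa [uIcc_of_le hT]
  have hgT : ContinuousOn (fun t => g (T - t)) (uIcc 0 T) :=
    hg'.comp (continuous_const.sub continuous_id).continuousOn fun t ht => by
      rw [uIcc_of_le hT] at ht ⊢; constructor <;> linarith [ht.1, ht.2]
  have h1 : IntervalIntegrable (fun t => g T / 2 * exp (b * t)) volume 0 T :=
    (hexp.intervalIntegrable 0 T).const_mul _
  have h2 : IntervalIntegrable (fun t => 1 / 2 * (exp (b * t) * g t)) volume 0 T :=
    ((hexp.continuousOn.mul hg').intervalIntegrable).const_mul _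
  have h3 : IntervalIntegrable (fun t => 1 / 2 * (exp (b * t) * g (T - t))) volume 0 T :=
    ((hexp.continuousOn.mul hgT).intervalIntegrable).const_mul _
  have hsplit : ∀ t, exp (b * t) * ((g t + g T - g (T - t)) / 2)
      = g T / 2 * exp (b * t) + 1 / 2 * (exp (b * t) * g t)
        - 1 / 2 * (exp (b * t) * g (T - t)) := fun t => by ring
  simp_rw [hsplit]
  rw [intervalIntegral.integral_sub (h1.add h2) h3, intervalIntegral.integral_add h1 h2,
    intervalIntegral.integral_const_mul, intervalIntegral.integral_const_mul,
    intervalIntegral.integral_const_mul, integral_exp_mul_real hb, integral_exp_mul_comp_sub,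
    mul_zero, exp_zero]

theorem cov_BU_formula_general
    {Ω : Type*} [MeasurableSpace Ω] (P : Measure Ω) [IsProbabilityMeasure P]
    (b α2 : ℝ) (hb : 0 < b) (hα2 : 0 < α2)
    (g : ℝ → ℝ)
    (hg_cont : ContinuousOn g (Set.Ici 0))
    (hg_zero : g 0 = 0)
    (hg_lim : Tendsto g atTop (nhds α2))
    (B : ℝ → Ω → ℝ)
    (hB_meas : Measurable fun p : ℝ × Ω => B p.1 p.2)
    (hB_cov : ∀ s, 0 ≤ s → ∀ t, 0 ≤ t →
      ∫ ω, B s ω * B t ω ∂P = (g t + g s - g |t - s|) / 2)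
    (U : ℝ → Ω → ℝ)
    (hU : ∀ T ω, U T ω = Real.exp (-b * T) * ∫ t in (0:ℝ)..T, Real.exp (b * t) * B t ω)
    :
    ∀ T, 0 < T →
      ∫ ω, B T ω * U T ω ∂P =
        1 / (2 * b) * g T - 1 / (2 * b) * Real.exp (-b * T) * g T
          + 1 / 2 * Real.exp (-b * T) * (∫ s in (0:ℝ)..T, Real.exp (b * s) * g s)
          - 1 / 2 * ∫ s in (0:ℝ)..T, Real.exp (-b * s) * g s := by
  intro T hT
  have hB : HasStationaryIncrementCov P B g := hB_cov
  have hmeas (t : ℝ) : AEStronglyMeasurable (B t) P :=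
    hB_meas.of_uncurry_left.aestronglyMeasurable
  have hL2 (t : ℝ) (ht : 0 < t) : MemLp (B t) 2 P :=
    hB.memLp_two hg_zero (hmeas t) ht.le (hB.apply_ne_zero hg_zero hmeas hg_lim hα2.ne' ht)
  calc ∫ ω, B T ω * U T ω ∂P
      = exp (-b * T) * ∫ ω, B T ω * (∫ t in 0..T, exp (b * t) * B t ω) ∂P := by
        simp_rw [hU, mul_left_comm (B T _), integral_const_mul]
    _ = exp (-b * T) * (g T / 2 * ((exp (b * T) - 1) / b)
          + 1 / 2 * (∫ s in 0..T, exp (b * s) * g s)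
          - 1 / 2 * (exp (b * T) * ∫ s in 0..T, exp (-b * s) * g s)) := by
        rw [hB.integral_mul_intervalIntegral hg_zero hB_meas hL2 (hg_cont.mono Icc_subset_Ici_self)
          (by fun_prop) hT, integral_exp_mul_stationaryIncrementCov hb.ne'
          (hg_cont.mono Icc_subset_Ici_self) hT.le]
    _ = _ := by
        rw [neg_mul, exp_neg]
        field_simp

theorem cov_BU_formula
    {Ω : Type*} [MeasurableSpace Ω] (P : Measure Ω) [IsProbabilityMeasure P]
    (b α2 : ℝ) (hb : 0 < b) (hα2 : 0 < α2)
    (g : ℝ → ℝ)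
    (hg_cont : ContinuousOn g (Set.Ici 0))
    (hg_bdd : ∃ C, ∀ t, 0 ≤ t → |g t| ≤ C)
    (hg_nonneg : ∀ t, 0 ≤ t → 0 ≤ g t)
    (hg_zero : g 0 = 0)
    (hg_lim : Tendsto g atTop (nhds α2))
    (B : ℝ → Ω → ℝ)
    (hB_meas : Measurable fun p : ℝ × Ω => B p.1 p.2)
    (hB_cont : ∀ᵐ ω ∂P, Continuous fun t => B t ω)
    (hB_zero : ∀ ω, B 0 ω = 0)
    (hB_mean : ∀ t, 0 ≤ t → ∫ ω, B t ω ∂P = 0)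
    (hB_cov : ∀ s, 0 ≤ s → ∀ t, 0 ≤ t →
      ∫ ω, B s ω * B t ω ∂P = (g t + g s - g |t - s|) / 2)
    (U : ℝ → Ω → ℝ)
    (hU : ∀ T ω, U T ω = Real.exp (-b * T) * ∫ t in (0:ℝ)..T, Real.exp (b * t) * B t ω)
    :
    ∀ T, 0 < T →
      ∫ ω, B T ω * U T ω ∂P =
        1 / (2 * b) * g T - 1 / (2 * b) * Real.exp (-b * T) * g T
          + 1 / 2 * Real.exp (-b * T) * (∫ s in (0:ℝ)..T, Real.exp (b * s) * g s)
          - 1 / 2 * ∫ s in (0:ℝ)..T, Real.exp (-b * s) * g s :=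
  cov_BU_formula_general P b α2 hb hα2 g hg_cont hg_zero hg_lim B hB_meas hB_cov U hU
end
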